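/- arXiv:2509.01253 — 2 statements merged into one kernel-verified Lean document; each statement's English description precedes it below -/
import Mathlib

section
/- (Partial trace extraction, level 1) For all P in the cyclotomic field K = ℚ[X]/(Φ_{t^α}) and any fixed element Ω (here Ω = conj(Ω_i^*), an element of K), Tr_{K_1/K_0}(P(X)·Ω(X)) evaluated after full descent can be written as Σ_{k=1}^{t−1} P(X^k)·Ω(X^k) composed with the remaining partial trace; formally, applying the sum of automorphisms X ↦ X^k for k = 1,...,t−1 to the product P·Ω computes the image of P·Ω under the sum over a set of coset representatives of Gal(K/K_1)-cosets corresponding to Gal(K_1/K_0). -/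
/-!
Every automorphism of `K` factors uniquely as `σ k * h` with `h ∈ Gal(K/K₁)`, and `h` fixes any
`x ∈ K₁`. Hence `Tr_{K/ℚ}(x) = ∑_τ τ x = |Gal(K/K₁)| • ∑_k σ k x`, while the tower formula gives
`Tr_{K/ℚ}(x) = [K : K₁] • Tr_{K₁/ℚ}(x)` with `[K : K₁] = |Gal(K/K₁)|`; cancel this nonzero
integer in characteristic zero.
-/

open IntermediateField

section CosetRepresentatives

variable {G ι : Type*} [Group G] {H : Subgroup G}

theorem Subgroup.bijective_mul_of_existsUnique_inv_mul_mem (σ : ι → G)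
    (hσ : ∀ g, ∃! k, (σ k)⁻¹ * g ∈ H) :
    Function.Bijective fun p : ι × H => σ p.1 * p.2 := by
  refine ⟨?_, fun g => ?_⟩
  · rintro ⟨k, h⟩ ⟨k', h'⟩ heq
    obtain ⟨_, -, huniq⟩ := hσ (σ k * h)
    have hk : k = k' := (huniq k (by simp)).trans (huniq k' (by simp [heq])).symm
    subst hk
    exact Prod.ext rfl (Subtype.ext (mul_left_cancel heq))
  · obtain ⟨k, hk, -⟩ := hσ g
    exact ⟨⟨k, ⟨_, hk⟩⟩, mul_inv_cancel_left _ _⟩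

theorem Subgroup.sum_eq_card_nsmul_sum_of_existsUnique_inv_mul_mem {M : Type*} [AddCommMonoid M]
    [Fintype G] [Fintype ι] (σ : ι → G) (hσ : ∀ g, ∃! k, (σ k)⁻¹ * g ∈ H) (f : G → M)
    (hf : ∀ g, ∀ h ∈ H, f (g * h) = f g) :
    ∑ g, f g = Nat.card H • ∑ k, f (σ k) := by
  classical
  rw [← Fintype.sum_bijective _ (bijective_mul_of_existsUnique_inv_mul_mem σ hσ) _ f
    fun _ => rfl, Fintype.sum_prod_type, Finset.smul_sum]
  refine Finset.sum_congr rfl fun k _ => ?_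
  simp only [hf _ _ (Subtype.prop _), Finset.sum_const, Finset.card_univ, Nat.card_eq_fintype_card]

end CosetRepresentatives

section PartialTrace

variable {F E ι : Type*} [Field F] [Field E] [Algebra F E] [FiniteDimensional F E] [IsGalois F E]

theorem IsGalois.card_nsmul_algebraMap_trace_fixedField (H : Subgroup Gal(E/F))
    (x : fixedField H) :
    Nat.card H • algebraMap F E (Algebra.trace F (fixedField H) x) = ∑ τ : Gal(E/F), τ x := by
  rw [← trace_eq_sum_automorphisms, ← Algebra.trace_trace (S := fixedField H) (x : E),
    ← IntermediateField.algebraMap_apply, Algebra.trace_algebraMap, map_nsmul, map_nsmul,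
    finrank_fixedField_eq_card]

theorem IsGalois.algebraMap_trace_fixedField_eq_sum [CharZero F] [Fintype ι]
    (H : Subgroup Gal(E/F)) (σ : ι → Gal(E/F)) (hσ : ∀ τ, ∃! k, (σ k)⁻¹ * τ ∈ H)
    (x : fixedField H) :
    algebraMap F E (Algebra.trace F (fixedField H) x) = ∑ k, σ k x := by
  have : CharZero E := charZero_of_injective_algebraMap (algebraMap F E).injective
  have hcard : (Nat.card H : E) ≠ 0 := Nat.cast_ne_zero.2 Nat.card_pos.ne'
  have hsum := card_nsmul_algebraMap_trace_fixedField H x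
  rw [Subgroup.sum_eq_card_nsmul_sum_of_existsUnique_inv_mul_mem σ hσ _
    fun τ h hh => congrArg τ (x.2 ⟨h, hh⟩), nsmul_eq_mul, nsmul_eq_mul] at hsum
  exact mul_left_cancel₀ hcard hsum

end PartialTrace

theorem partial_trace_extraction_level_one_general
    (t : ℕ)
    (M : ℕ+)
    (K : Type*) [Field K] [CharZero K] [IsCyclotomicExtension {(M : ℕ)} ℚ K]
    (G₁ : Subgroup (K ≃ₐ[ℚ] K))
    (K₁ : IntermediateField ℚ K)
    (hK₁ : K₁ = IntermediateField.fixedField G₁)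
    (σ : Fin (t - 1) → (K ≃ₐ[ℚ] K))
    (hreps : ∀ τ : K ≃ₐ[ℚ] K, ∃! k : Fin (t - 1), (σ k)⁻¹ * τ ∈ G₁) :
    ∀ (P Ω : K) (h : P * Ω ∈ K₁),
      algebraMap ℚ K (Algebra.trace ℚ K₁ ⟨P * Ω, h⟩) =
        ∑ k : Fin (t - 1), (σ k P) * (σ k Ω) := by
  subst hK₁
  intro P Ω h
  have : IsGalois ℚ K := IsCyclotomicExtension.isGalois {(M : ℕ)} ℚ K
  have : FiniteDimensional ℚ K := IsCyclotomicExtension.finiteDimensional {(M : ℕ)} ℚ K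
  exact (IsGalois.algebraMap_trace_fixedField_eq_sum G₁ σ hreps ⟨P * Ω, h⟩).trans
    (Finset.sum_congr rfl fun k _ => map_mul _ _ _)

/-- Level-1 partial trace extraction: with `t` prime, `α ≥ 1`, `M = t^α`,
`K = ℚ(ζ_M)`, let `K₁` be the fixed field of the subgroup
`Gal(K/K₁) = {σ_d : d ≡ 1 mod t}` of `Gal(K/ℚ)`, and let
`σ_1, ..., σ_{t-1}` be the automorphisms `X ↦ X^k` (`σ_k ζ = ζ^k`,
`k = 1, ..., t-1`), assumed to form a set of representatives of the cosets of
`Gal(K/K₁)` in `Gal(K/ℚ)` (corresponding to `Gal(K₁/K₀)`).  Then for all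
`P, Ω ∈ K` whose product lies in `K₁`, applying the sum of these automorphisms
to `P·Ω` computes the partial trace `Tr_{K₁/K₀}(P(X)·Ω(X))`:
`Tr_{K₁/K₀}(P·Ω) = ∑_{k=1}^{t-1} P(X^k)·Ω(X^k)`. -/
theorem partial_trace_extraction_level_one
    (t α : ℕ) (ht : t.Prime) (hα : 1 ≤ α)
    (M : ℕ+) (hM : (M : ℕ) = t ^ α)
    (K : Type*) [Field K] [CharZero K] [IsCyclotomicExtension {(M : ℕ)} ℚ K]
    [FiniteDimensional ℚ K]
    (hirr : Irreducible (Polynomial.cyclotomic M ℚ))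
    (ζ : K) (hζ : IsPrimitiveRoot ζ (M : ℕ))
    (hdvd1 : t ∣ (M : ℕ))
    (G₁ : Subgroup (K ≃ₐ[ℚ] K))
    (hG₁ : G₁ = Subgroup.comap (IsCyclotomicExtension.autEquivPow K hirr).toMonoidHom
        (MonoidHom.ker (Units.map (ZMod.castHom hdvd1 (ZMod t)).toMonoidHom)))
    (K₁ : IntermediateField ℚ K)
    (hK₁ : K₁ = IntermediateField.fixedField G₁)
    (σ : Fin (t - 1) → (K ≃ₐ[ℚ] K))
    (hσ : ∀ k : Fin (t - 1), σ k ζ = ζ ^ ((k : ℕ) + 1))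
    (hreps : ∀ τ : K ≃ₐ[ℚ] K, ∃! k : Fin (t - 1), (σ k)⁻¹ * τ ∈ G₁) :
    ∀ (P Ω : K) (h : P * Ω ∈ K₁),
      algebraMap ℚ K (Algebra.trace ℚ K₁ ⟨P * Ω, h⟩) =
        ∑ k : Fin (t - 1), (σ k P) * (σ k Ω) :=
  partial_trace_extraction_level_one_general t M K G₁ K₁ hK₁ σ hreps
end

section
/- (Key-switch count for fast full trace) Let M = t^α with t prime and α ≥ 1, and let ω_{t−1} be the multiset of prime factors of t−1 (with multiplicity). The factorized homomorphic trace algorithm uses exactly (α−1)(t−1) + Σ_{ℓ ∈ ω_{t−1}} (ℓ−1) key-switches, and this quantity is at most φ(M) − 1 = t^{α−1}(t−1) − 1 for all t ≥ 2, α ≥ 1 — i.e., the factorized count never exceeds the naive count. -/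
/-! Since `(a - 1) + (b - 1) ≤ ab - 1` for positive `a, b`, the sum of `ℓ - 1` over the prime
factors of `t - 1` is at most `t - 2`, so the factorized count is at most `α (t - 1) - 1`; and
`α ≤ t ^ (α - 1)` because `t ≥ 2`. -/

theorem List.sum_map_pred_le_prod_pred {l : List ℕ} (hl : ∀ a ∈ l, 0 < a) :
    (l.map (· - 1)).sum ≤ l.prod - 1 := by
  induction l with
  | nil => simp
  | cons a l ih =>
    have ha : 0 < a := hl a List.mem_cons_self
    have hP : 0 < l.prod := List.prod_pos fun b hb => hl b (List.mem_cons_of_mem a hb)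
    have hS := ih fun b hb => hl b (List.mem_cons_of_mem a hb)
    rw [List.map_cons, List.sum_cons, List.prod_cons]
    have : a + l.prod ≤ a * l.prod + 1 := by nlinarith
    omega

theorem Nat.sum_primeFactorsList_pred_le {n : ℕ} (hn : n ≠ 0) :
    (n.primeFactorsList.map (· - 1)).sum ≤ n - 1 := by
  simpa only [Nat.prod_primeFactorsList hn] using
    List.sum_map_pred_le_prod_pred (l := n.primeFactorsList) fun _ => Nat.pos_of_mem_primeFactorsList

/-- Key-switch count for the fast (factorized) full trace: for `M = t^α` with
`t` prime and `α ≥ 1`, letting `ω_{t-1}` be the multiset of prime factors of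
`t - 1` counted with multiplicity, the factorized trace algorithm's key-switch
count `(α-1)(t-1) + ∑_{ℓ ∈ ω_{t-1}} (ℓ-1)` never exceeds the naive count
`φ(M) - 1 = t^(α-1)(t-1) - 1`. -/
theorem fast_trace_keyswitch_count (t α : ℕ) (ht : t.Prime) (hα : 1 ≤ α) :
    ((α - 1) * (t - 1) + ((t - 1).primeFactorsList.map (fun ℓ => ℓ - 1)).sum ≤
      Nat.totient (t ^ α) - 1) ∧
    Nat.totient (t ^ α) = t ^ (α - 1) * (t - 1) := by
  have htot : Nat.totient (t ^ α) = t ^ (α - 1) * (t - 1) := Nat.totient_prime_pow ht hα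
  refine ⟨?_, htot⟩
  have ht2 := ht.two_le
  have hS := Nat.sum_primeFactorsList_pred_le (n := t - 1) (by omega)
  have hα_le : α * (t - 1) ≤ t ^ (α - 1) * (t - 1) :=
    Nat.mul_le_mul_right _ (by have := Nat.lt_pow_self (n := α - 1) ht.one_lt; omega)
  have hα_split : α * (t - 1) = (α - 1) * (t - 1) + (t - 1) := by
    conv_lhs => rw [← Nat.sub_add_cancel hα]
    rw [Nat.succ_mul]
  omega
end
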